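/- Let α ∈ (0,1), λ > 0, and let J = [[λ,1],[0,λ]]. Define B(t) := [[(1/α)exp(λ^{1/α} t), (1/α²) λ^{(1−α)/α} t exp(λ^{1/α} t)], [0, exp(λ^{1/α} t)]]. Then there is no function C : [0,∞) → ℂ^{2×2} with ‖C(t)‖ bounded (indeed with C(t) = O(1) as t → ∞) such that E_{α,α}(t^α J) = t^{1−α} B(t) + C(t) for all large t; i.e. the difference E_{α,α}(t^α J) − t^{1−α} B(t) is unbounded as t → ∞. -/
import Mathlib
open Matrix

lemma jordan_pow (a b : ℂ) (k : ℕ) :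
    ((!![a, b; 0, a]) ^ k) 1 0 = 0 ∧ ((!![a, b; 0, a]) ^ k) 0 0 = ((!![a, b; 0, a]) ^ k) 1 1 := by
  induction k with
  | zero => simp [Matrix.one_apply]
  | succ k ih =>
    obtain ⟨h1, h2⟩ := ih
    constructor <;>
    · simp [pow_succ, Matrix.mul_apply, Fin.sum_univ_two, h1, h2]

noncomputable def Lmap : Matrix (Fin 2) (Fin 2) ℂ →L[ℂ] ℂ :=
  { toFun := fun M => M 0 0 - M 1 1
    map_add' := by intros; simp; ring
    map_smul' := by intros; simp; ring
    cont := by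
      apply Continuous.sub
      · exact (continuous_apply _).comp (continuous_apply _)
      · exact (continuous_apply _).comp (continuous_apply _) }

lemma diag_eq (F : ℕ → Matrix (Fin 2) (Fin 2) ℂ) (hF : ∀ k, F k 0 0 = F k 1 1) :
    (∑' k, F k) 0 0 = (∑' k, F k) 1 1 := by
  have key : Lmap (∑' k, F k) = 0 := by
    by_cases hs : Summable F
    · rw [Lmap.map_tsum hs]
      have : ∀ k, Lmap (F k) = 0 := fun k => by
        simp [Lmap, hF k]
      simp [this]
    · rw [tsum_eq_zero_of_not_summable hs]; simp [Lmap]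
  simpa [Lmap, sub_eq_zero] using key

/-- For `J = [[λ,1],[0,λ]]` with `λ > 0` and
`B(t) = [[(1/α)e^{λ^{1/α}t}, (1/α²)λ^{(1−α)/α} t e^{λ^{1/α}t}],[0, e^{λ^{1/α}t}]]`,
the difference `E_{α,α}(t^α J) − t^{1−α} B(t)` is unbounded as `t → ∞`: there is no
constant bounding all its entries for `t ≥ 1`. -/
theorem deshpande_representation_false (α lam : ℝ) (hα : α ∈ Set.Ioo (0:ℝ) 1)
    (hlam : 0 < lam)
    (Eaa : ℝ → Matrix (Fin 2) (Fin 2) ℂ)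
    (hEaa : Eaa = fun t => ∑' k : ℕ, (Complex.Gamma (α * k + α))⁻¹ •
      ((((t ^ α : ℝ) : ℂ) • !![(lam : ℂ), 1; 0, (lam : ℂ)]) ^ k))
    (B : ℝ → Matrix (Fin 2) (Fin 2) ℂ)
    (hB : B = fun t =>
      !![(((1/α) * Real.exp (lam ^ (1/α) * t) : ℝ) : ℂ),
          (((1/α^2) * lam ^ ((1 - α)/α) * t * Real.exp (lam ^ (1/α) * t) : ℝ) : ℂ);
        0, ((Real.exp (lam ^ (1/α) * t) : ℝ) : ℂ)]) :
    ¬ ∃ C : ℝ, ∀ t : ℝ, 1 ≤ t → ∀ i j : Fin 2,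
        ‖(Eaa t - ((t ^ (1 - α) : ℝ) : ℂ) • B t) i j‖ ≤ C := by
  obtain ⟨hα0, hα1⟩ := hα
  rintro ⟨C, h⟩
  set r : ℝ := 1/α - 1 with hr
  have hrpos : 0 < r := by
    rw [hr]
    have : 1 < 1/α := by rw [lt_div_iff₀ hα0]; linarith
    linarith
  have hlpos : 0 < lam ^ (1/α) := Real.rpow_pos_of_pos hlam _
  set t : ℝ := max 1 ((2*C + 1)/(r * lam ^ (1/α))) with htdef
  have ht1 : (1:ℝ) ≤ t := le_max_left _ _
  -- diagonal entries of Eaa t are equal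
  have hdiag : Eaa t 0 0 = Eaa t 1 1 := by
    rw [hEaa]
    apply diag_eq
    intro k
    have hsm : (((t ^ α : ℝ) : ℂ) • !![(lam : ℂ), 1; 0, (lam : ℂ)]) =
        !![((t ^ α : ℝ) : ℂ) * lam, ((t ^ α : ℝ) : ℂ); 0, ((t ^ α : ℝ) : ℂ) * lam] := by
      ext i j
      fin_cases i <;> fin_cases j <;> simp [Matrix.smul_apply]
    rw [hsm]
    simp only [Matrix.smul_apply]
    rw [(jordan_pow _ _ k).2]
  -- compute the difference of the two diagonal entries
  set E : ℝ := Real.exp (lam ^ (1/α) * t) with hE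
  have key : (Eaa t - ((t ^ (1 - α) : ℝ) : ℂ) • B t) 1 1
      - (Eaa t - ((t ^ (1 - α) : ℝ) : ℂ) • B t) 0 0
      = ((t ^ (1 - α) * (E * r) : ℝ) : ℂ) := by
    simp [hB, Matrix.sub_apply, Matrix.smul_apply, hdiag]
    rw [hr, hE]
    rw [Complex.ofReal_exp]
    push_cast
    ring
  have h00 := h t ht1 0 0
  have h11 := h t ht1 1 1
  have hle : ‖(Eaa t - ((t ^ (1 - α) : ℝ) : ℂ) • B t) 1 1
      - (Eaa t - ((t ^ (1 - α) : ℝ) : ℂ) • B t) 0 0‖ ≤ 2*C := by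
    calc _ ≤ _ := norm_sub_le _ _
    _ ≤ 2*C := by linarith
  rw [key] at hle
  have hnorm : ‖((t ^ (1 - α) * (E * r) : ℝ) : ℂ)‖ = t ^ (1 - α) * (E * r) := by
    rw [Complex.norm_real, Real.norm_eq_abs, abs_of_nonneg]
    positivity
  rw [hnorm] at hle
  -- lower bound: t^(1-α) ≥ 1, E ≥ lam^(1/α) * t
  have htpow : 1 ≤ t ^ (1 - α) := Real.one_le_rpow ht1 (by linarith)
  have hEbig : lam ^ (1/α) * t ≤ E := by
    have := Real.add_one_le_exp (lam ^ (1/α) * t)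
    rw [hE]; linarith
  have htq : (2*C + 1)/(r * lam ^ (1/α)) ≤ t := le_max_right _ _
  have hprod : 0 < r * lam ^ (1/α) := by positivity
  have h2C1 : 2*C + 1 ≤ r * lam ^ (1/α) * t := by
    rw [div_le_iff₀ hprod] at htq
    linarith [htq]
  have hfinal : 2*C + 1 ≤ t ^ (1 - α) * (E * r) := by
    calc 2*C + 1 ≤ r * lam ^ (1/α) * t := h2C1
    _ = r * (lam ^ (1/α) * t) := by ring
    _ ≤ r * E := by nlinarith
    _ = 1 * (E * r) := by ring
    _ ≤ t ^ (1 - α) * (E * r) := by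
        apply mul_le_mul_of_nonneg_right htpow
        have hE0 : 0 < E := Real.exp_pos _
        positivity
  linarith
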